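/- Let A be a set, k ≥ 1, n > k, and for each i < n let γ_i ∈ A^(2^k). Define ζ_i(γ_i) ∈ A^((n+1)^k) as ζ_i(γ_i)_f = (γ_i)_{(χᵢ(f₀),…,χᵢ(f_{k-1}))} with χᵢ(m) = 1 iff m > i. Then for every f ∈ n^k, the set {i < n : Cell_f(ζ_i(γ_i)) is a nonconstant cube} has at most k elements; indeed Cell_f(ζ_i(γ_i)) depends on coordinate j only if fⱼ = i. -/

import Mathlib

/-- `ζ_i(γ)_f = γ_{(χᵢ(f₀),…,χᵢ(f_{k-1}))}` with `χᵢ(m) = 1` iff `m > i`. -/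
def zeta {A : Type*} (k n : ℕ) (i : ℕ) (γ : (Fin k → Fin 2) → A) :
    (Fin k → Fin (n + 1)) → A :=
  fun f => γ (fun j => if (f j).val ≤ i then 0 else 1)

/-- The unit cell of a complex at position `f ∈ n^k`. -/
def Cell {A : Type*} {k n : ℕ} (f : Fin k → Fin n) (ζ : (Fin k → Fin (n + 1)) → A) :
    (Fin k → Fin 2) → A :=
  fun g => ζ (fun j => ⟨(f j).val + (g j).val, by
    have := (f j).isLt; have := (g j).isLt; omega⟩)

/-- The cube `δ` depends on coordinate `j`. -/
def CubeDependsOn {A : Type*} {k : ℕ} (δ : (Fin k → Fin 2) → A) (j : Fin k) : Prop :=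
  ∃ g, δ g ≠ δ (Function.update g j (1 - g j))

theorem stmt_15 {A : Type*} (k : ℕ) (hk : 1 ≤ k) (n : ℕ) (hn : k < n)
    (γ : Fin n → (Fin k → Fin 2) → A) (f : Fin k → Fin n) :
    (∀ (i : Fin n) (j : Fin k),
        CubeDependsOn (Cell f (zeta k n i.val (γ i))) j → (f j).val = i.val) ∧
      {i : Fin n | ∃ j, CubeDependsOn (Cell f (zeta k n i.val (γ i))) j}.ncard ≤ k := by
  have key : ∀ (i : Fin n) (j : Fin k),
      CubeDependsOn (Cell f (zeta k n i.val (γ i))) j → (f j).val = i.val := by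
    intro i j ⟨g, hg⟩
    by_contra hne
    apply hg
    unfold Cell zeta
    congr 1
    funext j'
    by_cases hjj : j' = j
    · subst hjj
      simp only [Function.update_self]
      have h2 : ((1 : Fin 2) - g j').val = 1 - (g j').val := by
        simp [Fin.sub_def]; omega
      congr 1
      rw [h2]
      have hgj := (g j').isLt
      by_cases h : (f j').val + (g j').val ≤ i.val <;>
        by_cases h' : (f j').val + (1 - (g j').val) ≤ i.val <;> simp [h, h'] <;> omega
    · simp [Function.update_of_ne hjj]
  refine ⟨key, ?_⟩
  have hsub : {i : Fin n | ∃ j, CubeDependsOn (Cell f (zeta k n i.val (γ i))) j} ⊆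
      Set.range f := by
    rintro i ⟨j, hj⟩
    exact ⟨j, Fin.ext (key i j hj)⟩
  calc _ ≤ (Set.range f).ncard := Set.ncard_le_ncard hsub (Set.finite_range f)
    _ ≤ (Set.univ : Set (Fin k)).ncard := by
        rw [← Set.image_univ]
        exact Set.ncard_image_le Set.finite_univ
    _ = k := by rw [Set.ncard_univ]; simp
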